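/- Let j ≥ 2 be an integer and z ∈ [0,1], and let (Z_n) be the BEC Bhattacharyya process started at z. Then for every integer m ≥ 0: Pr( Z_m ∈ [2^{−(2j+1)}, 2^{−j}] ) ≤ m·Pr( Z_m ∈ [2^{−j}, 3/4] ) + 2^{−m}. -/

import Mathlib

/-!
Write `c = 2^{-j} ≤ 1/4`, `A = [c²/2, c]` and `B = [c, 3/4]`. Probabilities of events about `Z_m`
are counts of words of length `m` divided by `2^m`, and `#A ≤ m · #B + 1` is proved by induction on
`m`, splitting on the first letter: if some word reaches `B`, the two `+ 1`s of the subtrees are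
absorbed by `#B ≥ 1`. If no word reaches `B`, a path ending in `A` stays below `c`, and a `t₁` at
some `y < c` followed by `r` more steps is impossible: climbing from `y²` back to `c²/2` forces
`2^r y² ≥ c²/2`, while `B` being unreachable from `y` in `r + 1` steps forces `2^r y < 2c/3`.
So the all-`t₀` word is the only one landing in `A`.
-/

open MeasureTheory

/-- The BEC polar maps: `t₁(x) = x²`, `t₀(x) = 2x - x²`. -/
noncomputable def becT (b : Bool) (x : ℝ) : ℝ := if b then x ^ 2 else 2 * x - x ^ 2

/-- The BEC Bhattacharyya process started at `z`. -/
noncomputable def becZ (z : ℝ) : ℕ → (ℕ → Bool) → ℝ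
  | 0, _ => z
  | n + 1, ω => becT (ω n) (becZ z n ω)

/-- `μ` is the i.i.d. Bernoulli(1/2) product measure on `{0,1}^ℕ`,
characterized by its values on cylinder sets. -/
def IsBernoulliHalf (μ : Measure (ℕ → Bool)) : Prop :=
  ∀ (n : ℕ) (b : Fin n → Bool), μ {ω | ∀ i : Fin n, ω i = b i} = (2 : ENNReal)⁻¹ ^ n

open Set

section BecT

variable {x : ℝ}

@[simp] lemma becT_false (x : ℝ) : becT false x = 2 * x - x ^ 2 := rfl

@[simp] lemma becT_true (x : ℝ) : becT true x = x ^ 2 := rfl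

lemma one_sub_becT_false (x : ℝ) : 1 - becT false x = (1 - x) ^ 2 := by
  rw [becT_false]; ring

lemma becT_mem_Icc (hx : x ∈ Icc (0 : ℝ) 1) (b : Bool) : becT b x ∈ Icc (0 : ℝ) 1 := by
  obtain ⟨h0, h1⟩ := hx
  cases b <;> simp only [becT_false, becT_true] <;> constructor <;> nlinarith

lemma sq_le_becT (hx : x ∈ Icc (0 : ℝ) 1) (b : Bool) : x ^ 2 ≤ becT b x := by
  obtain ⟨h0, h1⟩ := hx
  cases b <;> simp only [becT_false, becT_true] <;> nlinarith

lemma becT_le_becT_false (hx : x ∈ Icc (0 : ℝ) 1) (b : Bool) : becT b x ≤ becT false x := by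
  obtain ⟨h0, h1⟩ := hx
  cases b <;> simp only [becT_false, becT_true] <;> nlinarith

end BecT

section BecZ

variable {x : ℝ} {ω : ℕ → Bool}

lemma becZ_zero (x : ℝ) (ω : ℕ → Bool) : becZ x 0 ω = x := rfl

lemma becZ_succ (x : ℝ) (n : ℕ) (ω : ℕ → Bool) :
    becZ x (n + 1) ω = becT (ω n) (becZ x n ω) := rfl

lemma becZ_mem_Icc (hx : x ∈ Icc (0 : ℝ) 1) (n : ℕ) (ω : ℕ → Bool) :
    becZ x n ω ∈ Icc (0 : ℝ) 1 := by
  induction n with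
  | zero => exact hx
  | succ n ih => exact becT_mem_Icc ih _

lemma becZ_congr {n : ℕ} {ω' : ℕ → Bool} (h : ∀ t < n, ω t = ω' t) :
    becZ x n ω = becZ x n ω' := by
  induction n with
  | zero => rfl
  | succ n ih =>
    rw [becZ_succ, becZ_succ, h n n.lt_succ_self, ih fun t ht => h t (ht.trans n.lt_succ_self)]

lemma becZ_add (x : ℝ) (i n : ℕ) (ω : ℕ → Bool) :
    becZ x (i + n) ω = becZ (becZ x i ω) n (fun t => ω (i + t)) := by
  induction n with
  | zero => rfl
  | succ n ih => rw [← add_assoc, becZ_succ, becZ_succ, ih]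

lemma becZ_succ' (x : ℝ) (n : ℕ) (ω : ℕ → Bool) :
    becZ x (n + 1) ω = becZ (becT (ω 0) x) n (fun t => ω (t + 1)) := by
  induction n with
  | zero => rfl
  | succ n ih => rw [becZ_succ, ih, becZ_succ]

lemma exists_becZ_add_mem {S : Set ℝ} (i : ℕ) {n : ℕ} (ω : ℕ → Bool)
    (h : ∃ ω', becZ (becZ x i ω) n ω' ∈ S) : ∃ ω', becZ x (i + n) ω' ∈ S := by
  obtain ⟨ω', hω'⟩ := h
  refine ⟨fun t => if t < i then ω t else ω' (t - i), ?_⟩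
  rw [becZ_add, becZ_congr fun t ht => if_pos ht]
  simpa using hω'

lemma pow_two_pow_le_one_sub_becZ (hx : x ∈ Icc (0 : ℝ) 1) (n : ℕ) (ω : ℕ → Bool) :
    (1 - x) ^ 2 ^ n ≤ 1 - becZ x n ω := by
  induction n with
  | zero => simp [becZ_zero]
  | succ n ih =>
    have h1x : 0 ≤ (1 - x) ^ 2 ^ n := pow_nonneg (by linarith [hx.2]) _
    calc (1 - x) ^ 2 ^ (n + 1) = ((1 - x) ^ 2 ^ n) ^ 2 := by rw [pow_succ, pow_mul]
      _ ≤ (1 - becZ x n ω) ^ 2 := pow_le_pow_left₀ h1x ih 2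
      _ = 1 - becT false (becZ x n ω) := (one_sub_becT_false _).symm
      _ ≤ 1 - becZ x (n + 1) ω := by
        linarith [becT_le_becT_false (becZ_mem_Icc hx n ω) (ω n), becZ_succ x n ω]

end BecZ

lemma one_sub_sq_div_two_lt_one_sub_sq_pow {c y : ℝ} (hc : c ≤ 1 / 4) (hy0 : 0 ≤ y) (hy1 : y ≤ 1)
    {N : ℕ} (hN : 1 ≤ N) (h : 1 - c < (1 - y) ^ (2 * N)) : 1 - c ^ 2 / 2 < (1 - y ^ 2) ^ N := by
  by_contra! hle
  have hc0 : 0 < c := by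
    nlinarith [pow_le_one₀ (n := 2 * N) (by linarith : 0 ≤ 1 - y) (by linarith)]
  have hN' : (1 : ℝ) ≤ N := by exact_mod_cast hN
  -- `(1 - y)² (1 + 2y) ≤ 1 - y²` together with Bernoulli's inequality for both sides
  have hprod : (1 - y) ^ (2 * N) * (1 + 2 * y) ^ N ≤ (1 - y ^ 2) ^ N := by
    rw [pow_mul, ← mul_pow]
    exact pow_le_pow_left₀ (by positivity) (by nlinarith) N
  have hbern₁ : 1 + N * (2 * y) ≤ (1 + 2 * y) ^ N := one_add_mul_le_pow (by linarith) N
  have hbern₂ : 1 + N * (-y ^ 2) ≤ (1 - y ^ 2) ^ N := by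
    simpa [sub_eq_add_neg] using one_add_mul_le_pow (a := -y ^ 2) (by nlinarith) N
  have hlin : (1 - c) * (1 + N * (2 * y)) < 1 - c ^ 2 / 2 :=
    calc (1 - c) * (1 + N * (2 * y)) ≤ (1 - c) * (1 + 2 * y) ^ N :=
          mul_le_mul_of_nonneg_left hbern₁ (by linarith)
      _ < (1 - y) ^ (2 * N) * (1 + 2 * y) ^ N := mul_lt_mul_of_pos_right h (by positivity)
      _ ≤ 1 - c ^ 2 / 2 := hprod.trans hle
  have hNy : N * y < 2 / 3 * c := by nlinarith
  nlinarith [mul_le_mul_of_nonneg_right hN' hy0]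

section Reach

variable {c : ℝ}

lemma exists_becT_mem_Icc (hc0 : 0 ≤ c) (hc : c ≤ 1 / 4) {y : ℝ} (hy : y ∈ Icc c (3 / 4)) :
    ∃ b, becT b y ∈ Icc c (3 / 4) := by
  obtain ⟨hcy, hy34⟩ := hy
  by_cases hy12 : y ≤ 1 / 2
  · exact ⟨false, by simp only [becT_false]; constructor <;> nlinarith⟩
  · exact ⟨true, by simp only [becT_true]; constructor <;> nlinarith⟩

lemma exists_becZ_mem_Icc_of_mem (hc0 : 0 ≤ c) (hc : c ≤ 1 / 4) (n : ℕ) {y : ℝ}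
    (hy : y ∈ Icc c (3 / 4)) : ∃ ω, becZ y n ω ∈ Icc c (3 / 4) := by
  induction n generalizing y with
  | zero => exact ⟨fun _ => false, hy⟩
  | succ n ih =>
    obtain ⟨b, hb⟩ := exists_becT_mem_Icc hc0 hc hy
    rw [add_comm]
    exact exists_becZ_add_mem 1 (fun _ => b) (ih hb)

/-- `1 - (1 - y) ^ 2 ^ n` is the endpoint of the all-`t₀` path of length `n` from `y`. -/
lemma exists_becZ_mem_Icc (hc0 : 0 ≤ c) (hc : c ≤ 1 / 4) (n : ℕ) {y : ℝ}
    (hy : y ∈ Icc 0 (3 / 4)) (hreach : (1 - y) ^ 2 ^ n ≤ 1 - c) :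
    ∃ ω, becZ y n ω ∈ Icc c (3 / 4) := by
  induction n generalizing y with
  | zero =>
    rw [pow_zero, pow_one] at hreach
    exact ⟨fun _ => false, show c ≤ y by linarith, hy.2⟩
  | succ n ih =>
    by_cases hcy : c ≤ y
    · exact exists_becZ_mem_Icc_of_mem hc0 hc _ ⟨hcy, hy.2⟩
    obtain ⟨hy0, -⟩ := hy
    have hy' : becT false y ∈ Icc 0 (3 / 4) := by
      simp only [becT_false]; constructor <;> nlinarith
    have hreach' : (1 - becT false y) ^ 2 ^ n ≤ 1 - c := by
      rwa [one_sub_becT_false, ← pow_mul, ← pow_succ']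
    rw [add_comm]
    exact exists_becZ_add_mem 1 (fun _ => false) (ih hy' hreach')

variable {x : ℝ} {k : ℕ} {ω : ℕ → Bool}

lemma becZ_notMem_Icc_of_forall (hc0 : 0 ≤ c) (hc : c ≤ 1 / 4)
    (hM : ∀ ω, becZ x k ω ∉ Icc c (3 / 4)) {i : ℕ} (hi : i ≤ k) :
    becZ x i ω ∉ Icc c (3 / 4) := by
  intro hB
  obtain ⟨ω', hω'⟩ := exists_becZ_add_mem i ω (exists_becZ_mem_Icc_of_mem hc0 hc (k - i) hB)
  rw [Nat.add_sub_cancel' hi] at hω'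
  exact hM ω' hω'

/-- Above `3/4` both maps stay above `9/16 > c`, so a path avoiding `[c, 3/4]` cannot come back
down below `c`. -/
lemma becZ_lt_of_forall_notMem_Icc (hc : c ≤ 1 / 4) (hx : x ∈ Icc (0 : ℝ) 1)
    (hB : ∀ i ≤ k, becZ x i ω ∉ Icc c (3 / 4)) (hk : becZ x k ω ≤ c) {i : ℕ} (hi : i ≤ k) :
    becZ x i ω < c := by
  by_contra! hci
  have hi34 : 3 / 4 < becZ x i ω := lt_of_not_ge fun h => hB i hi ⟨hci, h⟩
  have hup : ∀ l, i ≤ l → l ≤ k → 3 / 4 < becZ x l ω := by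
    refine Nat.le_induction (fun _ => hi34) fun l _ ih hlk => ?_
    have hl := ih (by omega)
    have hsq := sq_le_becT (becZ_mem_Icc hx l ω) (ω l)
    have hnot := hB (l + 1) hlk
    rw [becZ_succ] at hnot ⊢
    exact lt_of_not_ge fun h => hnot ⟨by nlinarith, h⟩
  linarith [hup k hi le_rfl]

/-- After a `t₁` at a point `y < c`, reaching `c²/2` would take so many steps that `[c, 3/4]`
becomes reachable from `y`. -/
lemma eq_false_of_becZ_mem_Icc (hc0 : 0 ≤ c) (hc : c ≤ 1 / 4) (hx : x ∈ Icc (0 : ℝ) 1)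
    (hM : ∀ ω, becZ x k ω ∉ Icc c (3 / 4)) (hA : becZ x k ω ∈ Icc (c ^ 2 / 2) c)
    {n : ℕ} (hn : n < k) : ω n = false := by
  by_contra hωn
  rw [Bool.not_eq_false] at hωn
  set y := becZ x n ω
  have hy : y ∈ Icc (0 : ℝ) 1 := becZ_mem_Icc hx n ω
  have hyc : y < c := becZ_lt_of_forall_notMem_Icc hc hx
    (fun i hi => becZ_notMem_Icc_of_forall hc0 hc hM hi) hA.2 hn.le
  obtain ⟨r, rfl⟩ : ∃ r, k = n + 1 + r := ⟨k - (n + 1), by omega⟩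
  have hlow : (1 - y ^ 2) ^ 2 ^ r ≤ 1 - c ^ 2 / 2 := by
    have hsplit : becZ x (n + 1 + r) ω = becZ (y ^ 2) r (fun t => ω (n + 1 + t)) := by
      rw [becZ_add, becZ_succ, hωn, becT_true]
    have hy2 : y ^ 2 ∈ Icc (0 : ℝ) 1 := ⟨by positivity, by nlinarith [hy.1, hy.2]⟩
    linarith [hA.1, pow_two_pow_le_one_sub_becZ hy2 r (fun t => ω (n + 1 + t))]
  have hhigh : 1 - c < (1 - y) ^ (2 * 2 ^ r) := by
    by_contra! hreach
    rw [← pow_succ'] at hreach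
    obtain ⟨ω', hω'⟩ := exists_becZ_add_mem n ω
      (exists_becZ_mem_Icc hc0 hc (r + 1) ⟨hy.1, by linarith⟩ hreach)
    exact hM ω' (by rwa [add_comm r, ← add_assoc] at hω')
  exact (one_sub_sq_div_two_lt_one_sub_sq_pow hc hy.1 hy.2 Nat.one_le_two_pow hhigh).not_ge hlow

end Reach

section Count

open Finset

/-- `becZ x m` reads only the first `m` letters, so the padding is irrelevant. -/
def padWord {m : ℕ} (v : Fin m → Bool) : ℕ → Bool :=
  fun t => if h : t < m then v ⟨t, h⟩ else false

lemma becZ_padWord_restrict (x : ℝ) (m : ℕ) (ω : ℕ → Bool) :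
    becZ x m (padWord fun i : Fin m => ω i) = becZ x m ω :=
  becZ_congr fun t ht => by simp [padWord, ht]

lemma becZ_padWord_cons (x : ℝ) {m : ℕ} (b : Bool) (w : Fin m → Bool) :
    becZ x (m + 1) (padWord (Fin.cons b w : Fin (m + 1) → Bool)) =
      becZ (becT b x) m (padWord w) := by
  rw [becZ_succ']
  congr 2
  funext t
  by_cases ht : t < m
  · simpa [padWord, ht] using Fin.cons_succ (α := fun _ => Bool) b w ⟨t, ht⟩
  · simp [padWord, ht]

open scoped Classical in
noncomputable def becCount (S : Set ℝ) (m : ℕ) (x : ℝ) : ℕ :=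
  #{v : Fin m → Bool | becZ x m (padWord v) ∈ S}

lemma becCount_succ (S : Set ℝ) (m : ℕ) (x : ℝ) :
    becCount S (m + 1) x = becCount S m (becT false x) + becCount S m (becT true x) := by
  classical
  simp only [becCount, card_filter]
  rw [← (Fin.consEquiv fun _ : Fin (m + 1) => Bool).sum_comp, Fintype.sum_prod_type,
    Fintype.sum_bool, add_comm]
  simp only [Fin.consEquiv, Equiv.coe_fn_mk]
  congr 1 <;> exact sum_congr rfl fun w _ => if_congr (by rw [becZ_padWord_cons]) rfl rfl

lemma becZ_notMem_of_becCount_eq_zero {S : Set ℝ} {m : ℕ} {x : ℝ} (h : becCount S m x = 0)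
    (ω : ℕ → Bool) : becZ x m ω ∉ S := by
  classical
  intro hω
  rw [becCount, card_eq_zero, filter_eq_empty_iff] at h
  exact h (mem_univ _) (by rwa [becZ_padWord_restrict])

lemma becCount_le_one {S : Set ℝ} {m : ℕ} {x : ℝ}
    (h : ∀ ω, becZ x m ω ∈ S → ∀ n < m, ω n = false) : becCount S m x ≤ 1 := by
  classical
  refine card_le_one.mpr fun v hv v' hv' => ?_
  have hfalse : ∀ v : Fin m → Bool, becZ x m (padWord v) ∈ S → v = fun _ => false :=
    fun v hv => funext fun i => by simpa [padWord] using h _ hv i i.isLt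
  rw [hfalse v (mem_filter.mp hv).2, hfalse v' (mem_filter.mp hv').2]

lemma becCount_le {c : ℝ} (hc0 : 0 ≤ c) (hc : c ≤ 1 / 4) (m : ℕ) {x : ℝ}
    (hx : x ∈ Icc (0 : ℝ) 1) :
    becCount (Icc (c ^ 2 / 2) c) m x ≤ m * becCount (Icc c (3 / 4)) m x + 1 := by
  induction m generalizing x with
  | zero => exact (card_le_univ _).trans (by simp)
  | succ m ih =>
    by_cases hB : becCount (Icc c (3 / 4)) (m + 1) x = 0
    · exact (becCount_le_one fun ω hA n hn => eq_false_of_becZ_mem_Icc hc0 hc hx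
        (becZ_notMem_of_becCount_eq_zero hB) hA hn).trans (Nat.le_add_left 1 _)
    · have h₀ := ih (becT_mem_Icc hx false)
      have h₁ := ih (becT_mem_Icc hx true)
      simp only [becCount_succ] at hB ⊢
      nlinarith [Nat.one_le_iff_ne_zero.mpr hB]

end Count

lemma measure_becZ_mem {μ : Measure (ℕ → Bool)} (hμ : IsBernoulliHalf μ) (x : ℝ) (m : ℕ)
    (S : Set ℝ) : μ {ω | becZ x m ω ∈ S} = becCount S m x * (2 : ENNReal)⁻¹ ^ m := by
  classical
  set F := Finset.univ.filter fun v : Fin m → Bool => becZ x m (padWord v) ∈ S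
  have hcyl : {ω | becZ x m ω ∈ S} = ⋃ v ∈ F, {ω | ∀ i : Fin m, ω i = v i} := by
    ext ω
    simp only [mem_ofPred_eq, mem_iUnion, exists_prop, F, Finset.mem_filter, Finset.mem_univ,
      true_and]
    constructor
    · exact fun h => ⟨fun i => ω i, by rwa [becZ_padWord_restrict], fun i => rfl⟩
    · rintro ⟨v, hv, hωv⟩
      obtain rfl : v = fun i : Fin m => ω i := funext fun i => (hωv i).symm
      rwa [becZ_padWord_restrict] at hv
  have hdisj : (F : Set (Fin m → Bool)).PairwiseDisjoint
      fun v => {ω : ℕ → Bool | ∀ i : Fin m, ω i = v i} :=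
    fun v _ v' _ hne => Set.disjoint_left.mpr fun ω h h' =>
      hne (funext fun i => (h i).symm.trans (h' i))
  have hmeas (v : Fin m → Bool) : MeasurableSet {ω : ℕ → Bool | ∀ i : Fin m, ω i = v i} := by
    simp only [ofPred_forall]
    exact .iInter fun i => measurableSet_eq_fun (measurable_pi_apply _) measurable_const
  rw [hcyl, measure_biUnion_finset hdisj fun v _ => hmeas v,
    Finset.sum_congr rfl fun v _ => hμ m v, Finset.sum_const, nsmul_eq_mul, becCount]

theorem stmt13_general (μ : Measure (ℕ → Bool)) (hμ : IsBernoulliHalf μ)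
    (j : ℕ) (hj : 2 ≤ j) (z : ℝ) (hz : z ∈ Set.Icc (0:ℝ) 1) :
    ∀ m : ℕ,
      (μ {ω | becZ z m ω ∈ Set.Icc (((1:ℝ)/2) ^ (2 * j + 1)) (((1:ℝ)/2) ^ j)}).toReal ≤
        (m : ℝ) * (μ {ω | becZ z m ω ∈ Set.Icc (((1:ℝ)/2) ^ j) (3/4)}).toReal +
          ((1:ℝ)/2) ^ m := by
  intro m
  set c : ℝ := (1 / 2) ^ j
  have hc0 : 0 ≤ c := by positivity
  have hc : c ≤ 1 / 4 := by
    calc c ≤ (1 / 2) ^ 2 := pow_le_pow_of_le_one (by norm_num) (by norm_num) hj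
      _ = 1 / 4 := by norm_num
  have hlow : ((1 : ℝ) / 2) ^ (2 * j + 1) = c ^ 2 / 2 := by
    rw [pow_succ, pow_mul']; ring
  have hcount : (becCount (Icc (c ^ 2 / 2) c) m z : ℝ) ≤ m * becCount (Icc c (3 / 4)) m z + 1 :=
    mod_cast becCount_le hc0 hc m hz
  have hhalf : ((2 : ENNReal)⁻¹ ^ m).toReal = (1 / 2) ^ m := by simp
  rw [hlow, measure_becZ_mem hμ, measure_becZ_mem hμ, ENNReal.toReal_mul, ENNReal.toReal_mul,
    hhalf, ENNReal.toReal_natCast, ENNReal.toReal_natCast]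
  nlinarith [mul_le_mul_of_nonneg_right hcount (by positivity : (0 : ℝ) ≤ (1 / 2) ^ m)]

theorem stmt13 (μ : Measure (ℕ → Bool)) [IsProbabilityMeasure μ] (hμ : IsBernoulliHalf μ)
    (j : ℕ) (hj : 2 ≤ j) (z : ℝ) (hz : z ∈ Set.Icc (0:ℝ) 1) :
    ∀ m : ℕ,
      (μ {ω | becZ z m ω ∈ Set.Icc (((1:ℝ)/2) ^ (2 * j + 1)) (((1:ℝ)/2) ^ j)}).toReal ≤
        (m : ℝ) * (μ {ω | becZ z m ω ∈ Set.Icc (((1:ℝ)/2) ^ j) (3/4)}).toReal +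
          ((1:ℝ)/2) ^ m :=
  stmt13_general μ hμ j hj z hz
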